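/- Let (A,·,α) be a regular Hom-pre-Lie algebra. Then there exist bilinear products ▷,◁ on A making (A,▷,◁,α) a Hom-L-dendriform algebra whose associated vertical product satisfies x▷y − y◁x = x·y for all x,y ∈ A if and only if there exist a representation (V,β,ρ,μ) of (A,·,α) with β bijective and a bijective Hom-O-operator T: V → A. -/

import Mathlib

open TensorProduct LinearMap Module

section Defs

variable {K : Type*} [Field K]

section Basic
variable {A : Type*} [AddCommGroup A] [Module K A]
variable {B : Type*} [AddCommGroup B] [Module K B]
variable {V : Type*} [AddCommGroup V] [Module K V]

/-- A Hom-pre-Lie algebra structure. -/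
def IsHomPreLie (m : A →ₗ[K] A →ₗ[K] A) (α : A →ₗ[K] A) : Prop :=
  (∀ x y, α (m x y) = m (α x) (α y)) ∧
  ∀ x y z, m (m x y) (α z) - m (α x) (m y z) = m (m y x) (α z) - m (α y) (m x z)

/-- A Hom-Lie algebra structure. -/
def IsHomLie (br : A →ₗ[K] A →ₗ[K] A) (φ : A →ₗ[K] A) : Prop :=
  (∀ x y, br x y = - br y x) ∧
  (∀ x y, φ (br x y) = br (φ x) (φ y)) ∧
  ∀ x y z, br (φ x) (br y z) + br (φ y) (br z x) + br (φ z) (br x y) = 0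

/-- A representation of a Hom-Lie algebra on `V` with respect to `β`. -/
def IsHomLieRep (br : A →ₗ[K] A →ₗ[K] A) (φ : A →ₗ[K] A)
    (β : Module.End K V) (ρ : A →ₗ[K] Module.End K V) : Prop :=
  (∀ x, ρ (φ x) * β = β * ρ x) ∧
  ∀ x y, ρ (br x y) * β = ρ (φ x) * ρ y - ρ (φ y) * ρ x

/-- A representation of a Hom-pre-Lie algebra on `V` with respect to `β`. -/
def IsHomPreLieRep (m : A →ₗ[K] A →ₗ[K] A) (α : A →ₗ[K] A)
    (β : Module.End K V) (ρ μ : A →ₗ[K] Module.End K V) : Prop :=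
  IsHomLieRep (m - m.flip) α β ρ ∧
  (∀ x, β * μ x = μ (α x) * β) ∧
  ∀ x y, μ (α y) * μ x - μ (m x y) * β = μ (α y) * ρ x - ρ (α x) * μ y

/-- A 1-cocycle of a Hom-Lie algebra with respect to a representation. -/
def IsHomLieCocycle (br : A →ₗ[K] A →ₗ[K] A) (φ : A →ₗ[K] A)
    (ρ : A →ₗ[K] Module.End K V) (δ : A →ₗ[K] V) : Prop :=
  ∀ x y, δ (br x y) = ρ (φ x) (δ y) - ρ (φ y) (δ x)

/-- A matched pair of Hom-Lie algebras. -/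
def IsHomLieMatchedPair (brA : A →ₗ[K] A →ₗ[K] A) (φA : A →ₗ[K] A)
    (brB : B →ₗ[K] B →ₗ[K] B) (φB : B →ₗ[K] B)
    (ρ : A →ₗ[K] Module.End K B) (ρ' : B →ₗ[K] Module.End K A) : Prop :=
  IsHomLie brA φA ∧ IsHomLie brB φB ∧
  IsHomLieRep brA φA φB ρ ∧ IsHomLieRep brB φB φA ρ' ∧
  (∀ x y x', ρ' (φB x') (brA x y) =
    brA (ρ' x' x) (φA y) + brA (φA x) (ρ' x' y) + ρ' (ρ y x') (φA x) - ρ' (ρ x x') (φA y)) ∧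
  ∀ x x' y', ρ (φA x) (brB x' y') =
    brB (ρ x x') (φB y') + brB (φB x') (ρ x y') + ρ (ρ' y' x) (φB x') - ρ (ρ' x' x) (φB y')

/-- A matched pair of Hom-pre-Lie algebras. -/
def IsHomPreLieMatchedPair (mA : A →ₗ[K] A →ₗ[K] A) (αA : A →ₗ[K] A)
    (mB : B →ₗ[K] B →ₗ[K] B) (αB : B →ₗ[K] B)
    (lA rA : A →ₗ[K] Module.End K B) (lB rB : B →ₗ[K] Module.End K A) : Prop :=
  IsHomPreLie mA αA ∧ IsHomPreLie mB αB ∧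
  IsHomPreLieRep mA αA αB lA rA ∧ IsHomPreLieRep mB αB αA lB rB ∧
  (∀ (x : A) (a b : B), rA (αA x) (mB a b - mB b a) =
    rA (lB b x) (αB a) - rA (lB a x) (αB b) + mB (αB a) (rA x b) - mB (αB b) (rA x a)) ∧
  (∀ (x : A) (a b : B), lA (αA x) (mB a b) =
    -(lA (lB a x - rB a x) (αB b)) + mB (lA x a - rA x a) (αB b)
      + rA (rB b x) (αB a) + mB (αB a) (lA x b)) ∧
  (∀ (a : B) (x y : A), rB (αB a) (mA x y - mA y x) =
    rB (lA y a) (αA x) - rB (lA x a) (αA y) + mA (αA x) (rB a y) - mA (αA y) (rB a x)) ∧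
  ∀ (a : B) (x y : A), lB (αB a) (mA x y) =
    -(lB (lA x a - rA x a) (αA y)) + mA (lB a x - rB a x) (αA y)
      + rB (rA y a) (αA x) + mA (αA x) (lB a y)

/-- A Hom-L-dendriform algebra structure. -/
def IsHomLDendriform (tr tl : A →ₗ[K] A →ₗ[K] A) (α : A →ₗ[K] A) : Prop :=
  (∀ x y, α (tr x y) = tr (α x) (α y)) ∧
  (∀ x y, α (tl x y) = tl (α x) (α y)) ∧
  (∀ x y z, tr (tr x y) (α z) + tr (tl x y) (α z) + tr (α y) (tr x z)
      - tr (tl y x) (α z) - tr (tr y x) (α z) - tr (α x) (tr y z) = 0) ∧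
  ∀ x y z, tl (tr x y) (α z) + tl (α y) (tr x z) + tl (α y) (tl x z)
      - tl (tl y x) (α z) - tr (α x) (tl y z) = 0

/-- A Hom-O-operator on a Hom-pre-Lie algebra with respect to a representation. -/
def IsHomOOperator (m : A →ₗ[K] A →ₗ[K] A) (α : A →ₗ[K] A)
    (β : V ≃ₗ[K] V) (ρ μ : A →ₗ[K] Module.End K V) (T : V →ₗ[K] A) : Prop :=
  (∀ v, T (β v) = α (T v)) ∧
  ∀ u v, m (T u) (T v) = T (ρ (T (β.symm u)) v + μ (T (β.symm v)) u)

/-- A quadratic Hom-pre-Lie algebra. -/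
def IsQuadraticHomPreLie (m : A →ₗ[K] A →ₗ[K] A) (α : A →ₗ[K] A)
    (ω : A →ₗ[K] A →ₗ[K] K) : Prop :=
  IsHomPreLie m α ∧
  (∀ x y, ω x y = - ω y x) ∧
  (∀ x, (∀ y, ω x y = 0) → x = 0) ∧
  (∀ x y, ω (α x) (α y) = ω x y) ∧
  ∀ x y z, ω (m x y) (α z) = - ω (α y) (m x z - m z x)

/-- A Manin triple for Hom-pre-Lie algebras. -/
def IsManinTriple (m : A →ₗ[K] A →ₗ[K] A) (α : A →ₗ[K] A)
    (ω : A →ₗ[K] A →ₗ[K] K) (A1 A2 : Submodule K A) : Prop :=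
  IsQuadraticHomPreLie m α ω ∧
  (∀ x ∈ A1, ∀ y ∈ A1, m x y ∈ A1) ∧ (∀ x ∈ A1, α x ∈ A1) ∧
  (∀ x ∈ A2, ∀ y ∈ A2, m x y ∈ A2) ∧ (∀ x ∈ A2, α x ∈ A2) ∧
  (∀ x ∈ A1, ∀ y ∈ A1, ω x y = 0) ∧ (∀ x ∈ A2, ∀ y ∈ A2, ω x y = 0) ∧
  IsCompl A1 A2

/-- A Hessian structure on a Hom-pre-Lie algebra. -/
def IsHessian (m : A →ₗ[K] A →ₗ[K] A) (α : A →ₗ[K] A) (Bf : A →ₗ[K] A →ₗ[K] K) : Prop :=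
  (∀ x y, Bf x y = Bf y x) ∧ (∀ x, (∀ y, Bf x y = 0) → x = 0) ∧
  (∀ x y, Bf (α x) (α y) = Bf x y) ∧
  ∀ x y z, Bf (m x y) (α z) - Bf (α x) (m y z) = Bf (m y x) (α z) - Bf (α y) (m x z)

end Basic

section Transpose
variable {X Y : Type*} [AddCommGroup X] [Module K X] [AddCommGroup Y] [Module K Y]

/-- The transpose of linear maps, as a bundled linear map. -/
noncomputable def transposeH : (X →ₗ[K] Y) →ₗ[K] (Y →ₗ[K] K) →ₗ[K] (X →ₗ[K] K) :=
  (LinearMap.llcomp K X Y K).flip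

@[simp] theorem transposeH_apply (f : X →ₗ[K] Y) (ξ : Y →ₗ[K] K) (x : X) :
    transposeH f ξ x = ξ (f x) := rfl

end Transpose

section StarOps
variable {A : Type*} [AddCommGroup A] [Module K A]

/-- The evaluation map into the double dual. -/
noncomputable def evalH : A →ₗ[K] ((A →ₗ[K] K) →ₗ[K] K) :=
  (LinearMap.id : (A →ₗ[K] K) →ₗ[K] (A →ₗ[K] K)).flip

/-- The operator `L^⋆` : `⟨L^⋆_x ξ, y⟩ = -⟨ξ, α⁻¹(x) · α⁻²(y)⟩`. -/
noncomputable def Lstar (m : A →ₗ[K] A →ₗ[K] A) (α : A ≃ₗ[K] A) :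
    A →ₗ[K] (A →ₗ[K] K) →ₗ[K] (A →ₗ[K] K) :=
  letI : AddCommGroup (A →ₗ[K] K) := LinearMap.addCommGroup;
  -(transposeH ∘ₗ
      (LinearMap.lcomp K A ((α ^ (-2 : ℤ) : A ≃ₗ[K] A) : A →ₗ[K] A)) ∘ₗ m ∘ₗ
      ((α⁻¹ : A ≃ₗ[K] A) : A →ₗ[K] A))

/-- The operator `R^⋆` : `⟨R^⋆_x ξ, y⟩ = -⟨ξ, α⁻²(y) · α⁻¹(x)⟩`. -/
noncomputable def Rstar (m : A →ₗ[K] A →ₗ[K] A) (α : A ≃ₗ[K] A) :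
    A →ₗ[K] (A →ₗ[K] K) →ₗ[K] (A →ₗ[K] K) :=
  letI : AddCommGroup (A →ₗ[K] K) := LinearMap.addCommGroup;
  -(transposeH ∘ₗ
      (LinearMap.lcomp K A ((α ^ (-2 : ℤ) : A ≃ₗ[K] A) : A →ₗ[K] A)) ∘ₗ m.flip ∘ₗ
      ((α⁻¹ : A ≃ₗ[K] A) : A →ₗ[K] A))

/-- The operator `ad^⋆ = L^⋆ - R^⋆`. -/
noncomputable def adStar (m : A →ₗ[K] A →ₗ[K] A) (α : A ≃ₗ[K] A) :
    A →ₗ[K] (A →ₗ[K] K) →ₗ[K] (A →ₗ[K] K) :=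
  letI : AddCommGroup (A →ₗ[K] K) := LinearMap.addCommGroup;
  Lstar m α - Rstar m α

variable [FiniteDimensional K A]

/-- The inverse of the double-dual evaluation isomorphism. -/
noncomputable def evalInvH : ((A →ₗ[K] K) →ₗ[K] K) →ₗ[K] A :=
  (Module.evalEquiv K A).symm.toLinearMap

/-- The operator `ℒ^⋆` : `⟨η, ℒ^⋆_ξ x⟩ = -⟨(α⁻¹)*(ξ) ∘ η, α²(x)⟩`. -/
noncomputable def Lcurly
    (mc : (A →ₗ[K] K) →ₗ[K] (A →ₗ[K] K) →ₗ[K] (A →ₗ[K] K))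
    (α : A ≃ₗ[K] A) : (A →ₗ[K] K) →ₗ[K] A →ₗ[K] A :=
  -((LinearMap.llcomp K A ((A →ₗ[K] K) →ₗ[K] K) A evalInvH) ∘ₗ
      (LinearMap.lcomp K ((A →ₗ[K] K) →ₗ[K] K)
        (evalH ∘ₗ ((α ^ (2 : ℤ) : A ≃ₗ[K] A) : A →ₗ[K] A))) ∘ₗ
      transposeH ∘ₗ mc ∘ₗ
      (transposeH ((α⁻¹ : A ≃ₗ[K] A) : A →ₗ[K] A)))

/-- The operator `ℛ^⋆` : `⟨η, ℛ^⋆_ξ x⟩ = -⟨η ∘ (α⁻¹)*(ξ), α²(x)⟩`. -/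
noncomputable def Rcurly
    (mc : (A →ₗ[K] K) →ₗ[K] (A →ₗ[K] K) →ₗ[K] (A →ₗ[K] K))
    (α : A ≃ₗ[K] A) : (A →ₗ[K] K) →ₗ[K] A →ₗ[K] A :=
  -((LinearMap.llcomp K A ((A →ₗ[K] K) →ₗ[K] K) A evalInvH) ∘ₗ
      (LinearMap.lcomp K ((A →ₗ[K] K) →ₗ[K] K)
        (evalH ∘ₗ ((α ^ (2 : ℤ) : A ≃ₗ[K] A) : A →ₗ[K] A))) ∘ₗ
      transposeH ∘ₗ mc.flip ∘ₗ
      (transposeH ((α⁻¹ : A ≃ₗ[K] A) : A →ₗ[K] A)))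

/-- The operator `𝔞𝔡^⋆ = ℒ^⋆ - ℛ^⋆`. -/
noncomputable def adCurly
    (mc : (A →ₗ[K] K) →ₗ[K] (A →ₗ[K] K) →ₗ[K] (A →ₗ[K] K))
    (α : A ≃ₗ[K] A) : (A →ₗ[K] K) →ₗ[K] A →ₗ[K] A :=
  Lcurly mc α - Rcurly mc α

end StarOps

section Tensor
variable {A : Type*} [AddCommGroup A] [Module K A]

/-- The pairing of `ξ ⊗ η` with elements of `A ⊗ A`. -/
noncomputable def tpair (ξ η : A →ₗ[K] K) : (A ⊗[K] A) →ₗ[K] K :=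
  (TensorProduct.lid K K).toLinearMap ∘ₗ TensorProduct.map ξ η

/-- The pairing of `x ⊗ y` with elements of `A* ⊗ A*`. -/
noncomputable def dpair (x y : A) : ((A →ₗ[K] K) ⊗[K] (A →ₗ[K] K)) →ₗ[K] K :=
  (TensorProduct.lid K K).toLinearMap ∘ₗ TensorProduct.map (evalH x) (evalH y)

/-- Pairing the first two tensor components of `A ⊗ A ⊗ A` with `ξ` and `η`. -/
noncomputable def pair12 (ξ η : A →ₗ[K] K) : (A ⊗[K] (A ⊗[K] A)) →ₗ[K] A :=
  (TensorProduct.lid K A).toLinearMap ∘ₗ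
    TensorProduct.map ξ ((TensorProduct.lid K A).toLinearMap ∘ₗ
      TensorProduct.map η LinearMap.id)

/-- The map `r^♯ : A* → A` associated to `r ∈ A ⊗ A`, `⟨r^♯(ξ), η⟩ = ⟨r, ξ ⊗ η⟩`. -/
noncomputable def rSharpL (r : A ⊗[K] A) : (A →ₗ[K] K) →ₗ[K] A :=
  ((LinearMap.llcomp K (A ⊗[K] A) (K ⊗[K] A) A (TensorProduct.lid K A).toLinearMap) ∘ₗ
    (LinearMap.rTensorHom A)).flip r

/-- The bilinear operation producing `[[r,r]]` out of `r ⊗ r`. -/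
noncomputable def homPreLieBB (m : A →ₗ[K] A →ₗ[K] A) (α : A →ₗ[K] A) :
    ((A ⊗[K] A) ⊗[K] (A ⊗[K] A)) →ₗ[K] (A ⊗[K] (A ⊗[K] A)) :=
  (TensorProduct.assoc K A A A).toLinearMap ∘ₗ
      (TensorProduct.map (TensorProduct.map α α) (TensorProduct.lift m)) ∘ₗ
      (TensorProduct.tensorTensorTensorComm K A A A A).toLinearMap
    - (TensorProduct.map α (TensorProduct.map (TensorProduct.lift (m.flip - m)) α)) ∘ₗ
      (LinearMap.lTensor A ((TensorProduct.assoc K A A A).symm.toLinearMap)) ∘ₗ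
      (TensorProduct.assoc K A A (A ⊗[K] A)).toLinearMap
    - (TensorProduct.map (TensorProduct.lift m)
        ((TensorProduct.map α α) ∘ₗ (TensorProduct.comm K A A).toLinearMap)) ∘ₗ
      (TensorProduct.tensorTensorTensorComm K A A A A).toLinearMap

/-- The element `[[r,r]] ∈ A ⊗ A ⊗ A`. -/
noncomputable def bracket2 (m : A →ₗ[K] A →ₗ[K] A) (α : A →ₗ[K] A) (r : A ⊗[K] A) :
    A ⊗[K] (A ⊗[K] A) :=
  homPreLieBB m α (r ⊗ₜ[K] r)

/-- A Hom-s-matrix in a Hom-pre-Lie algebra. -/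
def IsHomSMatrix {B : Type*} [AddCommGroup B] [Module K B]
    (mB : B →ₗ[K] B →ₗ[K] B) (γ : B ≃ₗ[K] B) (r : B ⊗[K] B) : Prop :=
  (TensorProduct.comm K B B) r = r ∧
  (∀ ξ, rSharpL r (ξ ∘ₗ ((γ⁻¹ : B ≃ₗ[K] B) : B →ₗ[K] B)) = γ (rSharpL r ξ)) ∧
  bracket2 mB (γ : B →ₗ[K] B) r = 0

/-- The representation `x ↦ F(x) ⊗ c + c ⊗ G(x)` on `Y ⊗ Y`. -/
noncomputable def tensorRep {Y : Type*} [AddCommGroup Y] [Module K Y]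
    (F G : A →ₗ[K] Y →ₗ[K] Y) (c : Y →ₗ[K] Y) :
    A →ₗ[K] Module.End K (Y ⊗[K] Y) :=
  (LinearMap.mulRight K (LinearMap.lTensor Y c)) ∘ₗ (LinearMap.rTensorHom Y) ∘ₗ F
    + (LinearMap.mulLeft K (LinearMap.rTensor Y c)) ∘ₗ (LinearMap.lTensorHom Y) ∘ₗ G

/-- The dual map `ρ^⋆` : `⟨ρ^⋆(x)ξ, u⟩ = -⟨(β⁻²)*(ξ), ρ(α(x))u⟩`. -/
noncomputable def rhoStar {V : Type*} [AddCommGroup V] [Module K V]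
    (α : A →ₗ[K] A) (β : V ≃ₗ[K] V) (ρ : A →ₗ[K] Module.End K V) :
    A →ₗ[K] (V →ₗ[K] K) →ₗ[K] (V →ₗ[K] K) :=
  letI : AddCommGroup (V →ₗ[K] K) := LinearMap.addCommGroup;
  -(transposeH ∘ₗ
      (LinearMap.mulLeft K (((β ^ (-2 : ℤ) : V ≃ₗ[K] V) : V →ₗ[K] V) : Module.End K V)) ∘ₗ
      ρ ∘ₗ α)

/-- The semidirect product Hom-pre-Lie product on `A × W`. -/
noncomputable def sdProduct {W : Type*} [AddCommGroup W] [Module K W]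
    (m : A →ₗ[K] A →ₗ[K] A) (l r : A →ₗ[K] W →ₗ[K] W) :
    (A × W) →ₗ[K] (A × W) →ₗ[K] (A × W) :=
  (m.compl₁₂ (LinearMap.fst K A W) (LinearMap.fst K A W)).compr₂ (LinearMap.inl K A W)
    + ((l.compl₁₂ (LinearMap.fst K A W) (LinearMap.snd K A W))
        + (r.compl₁₂ (LinearMap.fst K A W) (LinearMap.snd K A W)).flip).compr₂
      (LinearMap.inr K A W)

end Tensor

section Std
variable (K)
variable (A : Type*) [AddCommGroup A] [Module K A]

/-- The standard bilinear form `ω̄(x+ξ, y+η) = ⟨ξ,y⟩ - ⟨η,x⟩` on `A × A*`. -/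
noncomputable def stdOmega :
    (A × (A →ₗ[K] K)) →ₗ[K] (A × (A →ₗ[K] K)) →ₗ[K] K :=
  (LinearMap.id : (A →ₗ[K] K) →ₗ[K] (A →ₗ[K] K)).compl₁₂
      (LinearMap.snd K A (A →ₗ[K] K)) (LinearMap.fst K A (A →ₗ[K] K))
    - ((LinearMap.id : (A →ₗ[K] K) →ₗ[K] (A →ₗ[K] K)).compl₁₂
      (LinearMap.snd K A (A →ₗ[K] K)) (LinearMap.fst K A (A →ₗ[K] K))).flip

variable {K A}

/-- The standard product `⋄` on `A × A*`:
`(x+ξ) ⋄ (y+η) = x·y + 𝔞𝔡^⋆_ξ y - ℛ^⋆_η x + ξ∘η + ad^⋆_x η - R^⋆_y ξ`. -/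
noncomputable def stdDiamond [FiniteDimensional K A]
    (m : A →ₗ[K] A →ₗ[K] A) (α : A ≃ₗ[K] A)
    (mc : (A →ₗ[K] K) →ₗ[K] (A →ₗ[K] K) →ₗ[K] (A →ₗ[K] K)) :
    (A × (A →ₗ[K] K)) →ₗ[K] (A × (A →ₗ[K] K)) →ₗ[K] (A × (A →ₗ[K] K)) :=
  letI : AddCommGroup (A →ₗ[K] K) := LinearMap.addCommGroup;
  (m.compl₁₂ (LinearMap.fst K A (A →ₗ[K] K)) (LinearMap.fst K A (A →ₗ[K] K))
      + (adCurly mc α).compl₁₂ (LinearMap.snd K A (A →ₗ[K] K)) (LinearMap.fst K A (A →ₗ[K] K))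
      - ((Rcurly mc α).compl₁₂ (LinearMap.snd K A (A →ₗ[K] K))
          (LinearMap.fst K A (A →ₗ[K] K))).flip).compr₂
      (LinearMap.inl K A (A →ₗ[K] K))
    + (mc.compl₁₂ (LinearMap.snd K A (A →ₗ[K] K)) (LinearMap.snd K A (A →ₗ[K] K))
      + (adStar m α).compl₁₂ (LinearMap.fst K A (A →ₗ[K] K)) (LinearMap.snd K A (A →ₗ[K] K))
      - ((Rstar m α).compl₁₂ (LinearMap.fst K A (A →ₗ[K] K))
          (LinearMap.snd K A (A →ₗ[K] K))).flip).compr₂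
      (LinearMap.inr K A (A →ₗ[K] K))

end Std

section Bialg
variable {A : Type*} [AddCommGroup A] [Module K A]

/-- A Hom-pre-Lie bialgebra: the two 1-cocycle conditions on the
comultiplications `φ*` and `ψ*`. -/
def IsHomPreLieBialgebra (m : A →ₗ[K] A →ₗ[K] A) (α : A ≃ₗ[K] A)
    (mc : (A →ₗ[K] K) →ₗ[K] (A →ₗ[K] K) →ₗ[K] (A →ₗ[K] K))
    (φs : A →ₗ[K] A ⊗[K] A)
    (ψs : (A →ₗ[K] K) →ₗ[K] (A →ₗ[K] K) ⊗[K] (A →ₗ[K] K)) : Prop :=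
  letI : AddCommGroup (A →ₗ[K] K) := LinearMap.addCommGroup;
  IsHomLieCocycle (m - m.flip) (α : A →ₗ[K] A)
    (tensorRep (m ∘ₗ ((α ^ (-2 : ℤ) : A ≃ₗ[K] A) : A →ₗ[K] A))
      ((m - m.flip) ∘ₗ ((α ^ (-2 : ℤ) : A ≃ₗ[K] A) : A →ₗ[K] A))
      (α : A →ₗ[K] A)) φs ∧
  IsHomLieCocycle (mc - mc.flip) (transposeH ((α⁻¹ : A ≃ₗ[K] A) : A →ₗ[K] A))
    (tensorRep (mc ∘ₗ transposeH ((α ^ (2 : ℤ) : A ≃ₗ[K] A) : A →ₗ[K] A))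
      ((mc - mc.flip) ∘ₗ transposeH ((α ^ (2 : ℤ) : A ≃ₗ[K] A) : A →ₗ[K] A))
      (transposeH ((α⁻¹ : A ≃ₗ[K] A) : A →ₗ[K] A))) ψs

end Bialg

end Defs

universe u v

theorem stmt_16 {K : Type u} [Field K] {A : Type v} [AddCommGroup A] [Module K A]
    (m : A →ₗ[K] A →ₗ[K] A) (α : A ≃ₗ[K] A)
    (h : IsHomPreLie m (α : A →ₗ[K] A)) :
    (∃ tr tl : A →ₗ[K] A →ₗ[K] A,
        IsHomLDendriform tr tl (α : A →ₗ[K] A) ∧ tr - tl.flip = m)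
      ↔ ∃ (V : Type v) (_ : AddCommGroup V) (_ : Module K V) (β : V ≃ₗ[K] V)
          (ρ μ : A →ₗ[K] Module.End K V) (T : V →ₗ[K] A),
          IsHomPreLieRep m (α : A →ₗ[K] A) ((β : V →ₗ[K] V) : Module.End K V) ρ μ ∧
          Function.Bijective T ∧
          IsHomOOperator m (α : A →ₗ[K] A) β ρ μ T := by
  constructor
  · rintro ⟨tr, tl, ⟨htr, htl, hax1, hax2⟩, hsum⟩
    subst hsum
    simp only [LinearEquiv.coe_coe] at htr htl hax1 hax2
    refine ⟨A, inferInstance, inferInstance, α,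
      (tr ∘ₗ (α : A →ₗ[K] A) : A →ₗ[K] Module.End K A),
      (-(tl ∘ₗ (α : A →ₗ[K] A)) : A →ₗ[K] Module.End K A),
      LinearMap.id, ⟨⟨?_, ?_⟩, ?_, ?_⟩, Function.bijective_id, ?_, ?_⟩
    · intro x
      ext v
      simp only [Module.End.mul_apply, LinearMap.comp_apply, LinearEquiv.coe_coe, htr]
    · intro x y
      ext v
      simp only [Module.End.mul_apply, LinearMap.sub_apply, LinearMap.comp_apply,
        LinearMap.flip_apply, LinearEquiv.coe_coe, map_sub, htr, htl]
      linear_combination (norm := module) hax1 (α x) (α y) v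
    · intro x
      ext v
      simp only [Module.End.mul_apply, LinearMap.comp_apply, LinearMap.neg_apply,
        LinearEquiv.coe_coe, map_neg, htl]
    · intro x y
      ext u
      simp only [Module.End.mul_apply, LinearMap.sub_apply, LinearMap.neg_apply,
        LinearMap.comp_apply, LinearMap.flip_apply, LinearEquiv.coe_coe, map_sub,
        map_neg, neg_neg, htr, htl]
      linear_combination (norm := module) hax2 (α x) (α y) u
    · intro v
      simp
    · intro u v
      simp only [LinearMap.id_coe, id_eq, LinearMap.sub_apply, LinearMap.flip_apply,
        LinearMap.add_apply, LinearMap.neg_apply, LinearMap.comp_apply,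
        LinearEquiv.coe_coe, LinearEquiv.apply_symm_apply]
      abel
  · rintro ⟨V, _, _, β, ρ, μ, T, ⟨⟨hρβ, hρ2⟩, hμβ, hμ2⟩, hbij, hTβ, hTO⟩
    have hTβ' : ∀ v, T (β v) = α (T v) := by
      intro v; simpa using hTβ v
    let e : V ≃ₗ[K] A := LinearEquiv.ofBijective T hbij
    have hTW : ∀ x : A, T (e.symm x) = x := fun x => e.apply_symm_apply x
    have hWT : ∀ v : V, e.symm (T v) = v := fun v => e.symm_apply_apply v
    have hρβ' : ∀ (x : A) (v : V), ρ (α x) (β v) = β (ρ x v) := by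
      intro x v; simpa using LinearMap.congr_fun (hρβ x) v
    have hμβ' : ∀ (x : A) (v : V), β (μ x v) = μ (α x) (β v) := by
      intro x v; simpa using LinearMap.congr_fun (hμβ x) v
    have hβρ : ∀ (x : A) (v : V), β.symm (ρ x v) = ρ (α.symm x) (β.symm v) := by
      intro x v
      apply β.injective
      rw [β.apply_symm_apply]
      have h := hρβ' (α.symm x) (β.symm v)
      rw [α.apply_symm_apply, β.apply_symm_apply] at h
      exact h
    have hβμ : ∀ (x : A) (v : V), β.symm (μ x v) = μ (α.symm x) (β.symm v) := by
      intro x v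
      apply β.injective
      rw [β.apply_symm_apply]
      have h := hμβ' (α.symm x) (β.symm v)
      rw [α.apply_symm_apply, β.apply_symm_apply] at h
      exact h.symm
    have hTβi : ∀ v, T (β.symm v) = α.symm (T v) := by
      intro v
      apply α.injective
      rw [α.apply_symm_apply, ← hTβ', β.apply_symm_apply]
    have hWα : ∀ x : A, e.symm (α x) = β (e.symm x) := by
      intro x
      apply hbij.1
      rw [hTW, hTβ', hTW]
    have hWαi : ∀ x : A, e.symm (α.symm x) = β.symm (e.symm x) := by
      intro x
      apply hbij.1
      rw [hTW, hTβi, hTW]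
    have hm' : ∀ x y : A, m x y = T (ρ (α.symm x) (e.symm y) + μ (α.symm y) (e.symm x)) := by
      intro x y
      have h := hTO (e.symm x) (e.symm y)
      simp only [hTW, hTβi] at h
      exact h
    let tr : A →ₗ[K] A →ₗ[K] A := LinearMap.mk₂ K (fun x y => T (ρ (α.symm x) (e.symm y)))
      (by intros; simp [map_add, LinearMap.add_apply])
      (by intros; simp [map_smul, LinearMap.smul_apply])
      (by intros; simp [map_add])
      (by intros; simp [map_smul])
    let tl : A →ₗ[K] A →ₗ[K] A := LinearMap.mk₂ K (fun x y => -T (μ (α.symm x) (e.symm y)))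
      (by intros; simp [map_add, LinearMap.add_apply, neg_add, add_comm])
      (by intros; simp [map_smul, LinearMap.smul_apply])
      (by intros; simp [map_add, neg_add, add_comm])
      (by intros; simp [map_smul])
    have htr_def : ∀ x y : A, tr x y = T (ρ (α.symm x) (e.symm y)) := fun _ _ => rfl
    have htl_def : ∀ x y : A, tl x y = -T (μ (α.symm x) (e.symm y)) := fun _ _ => rfl
    refine ⟨tr, tl, ⟨?_, ?_, ?_, ?_⟩, ?_⟩
    · intro x y
      simp only [LinearEquiv.coe_coe, htr_def, hWα, LinearEquiv.symm_apply_apply]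
      rw [← hTβ']
      congr 1
      have h := hρβ' (α.symm x) (e.symm y)
      rw [α.apply_symm_apply] at h
      exact h.symm
    · intro x y
      simp only [LinearEquiv.coe_coe, htl_def, hWα, LinearEquiv.symm_apply_apply, map_neg]
      rw [← hTβ', neg_inj]
      congr 1
      have h := hμβ' (α.symm x) (e.symm y)
      rw [α.apply_symm_apply] at h
      exact h
    · intro x y z
      simp only [LinearEquiv.coe_coe]
      have h4 : α.symm (tr x y + tl x y - tl y x - tr y x)
          = m (α.symm x) (α.symm y) - m (α.symm y) (α.symm x) := by
        rw [hm' (α.symm x) (α.symm y), hm' (α.symm y) (α.symm x)]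
        simp only [htr_def, htl_def, map_add, map_sub, map_neg, hWαi, ← hTβi, hβρ, hβμ]
        abel
      have h5 := LinearMap.congr_fun (hρ2 (α.symm x) (α.symm y)) (e.symm z)
      simp only [Module.End.mul_apply, LinearMap.sub_apply, LinearMap.flip_apply,
        LinearEquiv.coe_coe, LinearEquiv.apply_symm_apply] at h5
      have h6 : tr (tr x y + tl x y - tl y x - tr y x) (α z)
          = T (ρ x (ρ (α.symm y) (e.symm z))) - T (ρ y (ρ (α.symm x) (e.symm z))) := by
        rw [htr_def, hWα, h4, h5, map_sub]
      have hexp : tr (tr x y + tl x y - tl y x - tr y x) (α z)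
          = tr (tr x y) (α z) + tr (tl x y) (α z) - tr (tl y x) (α z) - tr (tr y x) (α z) := by
        simp only [map_add, map_sub, LinearMap.add_apply, LinearMap.sub_apply]
      have h7 : tr (α y) (tr x z) = T (ρ y (ρ (α.symm x) (e.symm z))) := by
        rw [htr_def, htr_def, LinearEquiv.symm_apply_apply, hWT]
      have h8 : tr (α x) (tr y z) = T (ρ x (ρ (α.symm y) (e.symm z))) := by
        rw [htr_def, htr_def, LinearEquiv.symm_apply_apply, hWT]
      linear_combination (norm := module) h6 - hexp + h7 - h8
    · intro x y z
      simp only [LinearEquiv.coe_coe]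
      have h4 : α.symm (tr x y - tl y x) = m (α.symm x) (α.symm y) := by
        rw [hm' (α.symm x) (α.symm y)]
        simp only [htr_def, htl_def, map_add, map_sub, map_neg, hWαi, ← hTβi, hβρ, hβμ,
          sub_neg_eq_add]
      have h5 := LinearMap.congr_fun (hμ2 (α.symm x) (α.symm y)) (e.symm z)
      simp only [Module.End.mul_apply, LinearMap.sub_apply, LinearEquiv.coe_coe,
        LinearEquiv.apply_symm_apply] at h5
      have h5A : T (μ y (μ (α.symm x) (e.symm z)))
            - T (μ (m (α.symm x) (α.symm y)) (β (e.symm z)))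
          = T (μ y (ρ (α.symm x) (e.symm z))) - T (ρ x (μ (α.symm y) (e.symm z))) := by
        rw [← map_sub, ← map_sub, h5]
      have h6 : tl (tr x y - tl y x) (α z)
          = -T (μ (m (α.symm x) (α.symm y)) (β (e.symm z))) := by
        rw [htl_def, hWα, h4]
      have hexp : tl (tr x y - tl y x) (α z)
          = tl (tr x y) (α z) - tl (tl y x) (α z) := by
        simp only [map_sub, LinearMap.sub_apply]
      have h7 : tl (α y) (tr x z) = -T (μ y (ρ (α.symm x) (e.symm z))) := by
        rw [htl_def, htr_def, LinearEquiv.symm_apply_apply, hWT]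
      have h8 : tl (α y) (tl x z) = T (μ y (μ (α.symm x) (e.symm z))) := by
        simp only [htl_def, LinearEquiv.symm_apply_apply, map_neg, hWT, neg_neg]
      have h9 : tr (α x) (tl y z) = -T (ρ x (μ (α.symm y) (e.symm z))) := by
        simp only [htr_def, htl_def, LinearEquiv.symm_apply_apply, map_neg, hWT]
      linear_combination (norm := module) h6 - hexp + h7 + h8 - h9 + h5A
    · ext x y
      simp only [LinearMap.sub_apply, LinearMap.flip_apply, htr_def, htl_def, hm',
        map_add, sub_neg_eq_add]
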